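/- For every standard word w of total length r, the multipartition γ̲_w is a standard Kleshchev multipartition of r relative to f_w* = (−f_m,…,−f_1); that is, γ̲_w satisfies conditions (SK1), (SK2) and (SK3) with f replaced by f_w*. -/

import Mathlib

/-- An integral segment: a pair `(i, j)` of integers (proper when `i ≤ j`). -/
abbrev Seg := ℤ × ℤ

/-- The length `j - i + 1` of a segment. -/
def segLen (s : Seg) : ℤ := s.2 - s.1 + 1

/-- A standard word of total length `r`: a nonempty sequence of integral segments whose
upper endpoints weakly increase, such that lower endpoints weakly decrease on ties,
of total length `r`. -/
def IsStandardWord (r : ℕ) (w : List Seg) : Prop :=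
  w ≠ [] ∧ (∀ s ∈ w, s.1 ≤ s.2) ∧
  w.Chain' (fun p q => p.2 ≤ q.2 ∧ (p.2 = q.2 → q.1 ≤ p.1)) ∧
  (w.map segLen).sum = (r : ℤ)

/-- Number of further segments continuing the chain started at `p`:
consecutive upper endpoints increase by exactly 1 and lower endpoints strictly increase. -/
def chainLen : Seg → List Seg → ℕ
  | _, [] => 0
  | p, q :: rest => if q.2 = p.2 + 1 ∧ p.1 < q.1 then chainLen q rest + 1 else 0

/-- The block decomposition of a word into maximal chains. -/
def blocks : List Seg → List (List Seg)
  | [] => []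
  | p :: rest =>
      (p :: rest.take (chainLen p rest)) :: blocks (rest.drop (chainLen p rest))
termination_by w => w.length
decreasing_by
  simp only [List.length_drop, List.length_cons]
  omega

/-- `γ̲_w`: the multipartition attached to a word by the block decomposition. -/
def gammaOf (w : List Seg) : List (List ℕ) :=
  (blocks w).map (fun b => b.map (fun s => (segLen s).toNat))

/-- `f_w`: the tuple of upper endpoints of the first segments of the blocks,
in reversed block order (so `f_m = j_1`). -/
def fOf (w : List Seg) : List ℤ :=
  ((blocks w).map (fun b => (b.headI).2)).reverse

/-- A partition: a weakly decreasing list of positive integers. -/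
def IsPartition (p : List ℕ) : Prop := p.Pairwise (· ≥ ·) ∧ ∀ x ∈ p, 0 < x

/-- The `j`-th part of a partition (1-based), with the convention `p_j = 0` for `j > ℓ(p)`. -/
def part (p : List ℕ) (j : ℕ) : ℕ := p.getD (j - 1) 0

/-- The `a`-th entry of an integer tuple (1-based). -/
def fpart (f : List ℤ) (a : ℕ) : ℤ := f.getD (a - 1) 0

/-- The `a`-th component of a multipartition (1-based). -/
def mpart (γ : List (List ℕ)) (a : ℕ) : List ℕ := γ.getD (a - 1) []

/-- A multipartition of `r`: a tuple of partitions of total size `r`. -/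
def IsMultipartition (r : ℕ) (γ : List (List ℕ)) : Prop :=
  (∀ p ∈ γ, IsPartition p) ∧ (γ.map List.sum).sum = r

/-- `f* = (−f_m, …, −f_1)`. -/
def fstar (f : List ℤ) : List ℤ := (f.map (fun x => -x)).reverse

/-- Kleshchev multipartition relative to a weakly decreasing integer tuple `g`:
`γ^{(k)}_{j + g_k − g_{k+1}} ≤ γ^{(k+1)}_j` for all `j ≥ 1` and `1 ≤ k ≤ m−1`. -/
def IsKleshchev (g : List ℤ) (γ : List (List ℕ)) : Prop :=
  ∀ k j, 1 ≤ k → k ≤ g.length - 1 → 1 ≤ j →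
    part (mpart γ k) (j + (fpart g k - fpart g (k + 1)).toNat) ≤ part (mpart γ (k + 1)) j

/-- Standard Kleshchev multipartition of `r` relative to `f`: conditions (SK1)–(SK3). -/
def IsStandardKleshchev (r : ℕ) (f : List ℤ) (γ : List (List ℕ)) : Prop :=
  γ.length = f.length ∧
  IsMultipartition r γ ∧
  (∀ a, 1 ≤ a → a ≤ γ.length → mpart γ a ≠ []) ∧
  (∀ a, 1 ≤ a → a ≤ f.length - 1 →
    ((mpart γ a).length : ℤ) ≤ (fpart f a - fpart f (a + 1)) + 1 ∧
    part (mpart γ a) ((fpart f a - fpart f (a + 1)).toNat + 1) ≤ part (mpart γ (a + 1)) 1) ∧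
  (∀ a, 1 ≤ a → a ≤ f.length - 1 →
    ((mpart γ a).length : ℤ) = fpart f a - fpart f (a + 1) →
    (part (mpart γ a) ((fpart f a - fpart f (a + 1)).toNat) : ℤ) ≤
      (part (mpart γ (a + 1)) 1 : ℤ) - 1)

/-- `λ′_j = #{a : λ_a ≥ j}`. -/
def conjCount (p : List ℕ) (j : ℕ) : ℕ := (p.filter (fun x => j ≤ x)).length

/-- The conjugate partition, as a list of length `λ_1`. -/
def conjList (p : List ℕ) : List ℕ := (List.range p.headI).map (fun j0 => conjCount p (j0 + 1))

/-- `λ̲′ = (λ^{(m)′}, …, λ^{(1)′})`. -/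
def conjMulti (γ : List (List ℕ)) : List (List ℕ) := (γ.map conjList).reverse

/-- Column residual segments of a single partition with parameter `fk`:
the `j`-th one is `(f_k + j − λ′_j, f_k + j − 1)`, for `j = 1, …, λ_1`. -/
def colSegs (fk : ℤ) (p : List ℕ) : List Seg :=
  (List.range p.headI).map (fun (j0 : ℕ) =>
    (fk + (j0 : ℤ) + 1 - (conjCount p (j0 + 1) : ℤ), fk + (j0 : ℤ)))

/-- Column reading `s^c_{λ̲;f}`: components `k = m, …, 1`, columns `j = 1, …, λ^{(k)}_1`. -/
def colReading (f : List ℤ) (lam : List (List ℕ)) : List Seg :=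
  (((lam.zip f).reverse).map (fun pk => colSegs pk.2 pk.1)).flatten

/-- Row residual segments of a single partition with parameter `fk`:
the `i`-th one is `(f_k + 1 − i, f_k + λ_i − i)`, for `i = 1, …, ℓ(λ)`. -/
def rowSegs (fk : ℤ) (p : List ℕ) : List Seg :=
  (List.range p.length).map (fun (i0 : ℕ) =>
    (fk - (i0 : ℤ), fk + ((p.getD i0 0 : ℕ) : ℤ) - (i0 : ℤ) - 1))

/-- Row reading `s^r_{λ̲;f}`: components `k = 1, …, m`, rows `i = 1, …, ℓ(λ^{(k)})`. -/
def rowReading (f : List ℤ) (lam : List (List ℕ)) : List Seg :=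
  ((lam.zip f).map (fun pk => rowSegs pk.2 pk.1)).flatten

/-- The inverse of a segment: `(i, j) ↦ (−j, −i)`. -/
def segInv (s : Seg) : Seg := (-s.2, -s.1)

/-- The word attached to a tuple `f` and a multipartition `γ`:
for each `a = 1, …, m` and `b = 1, …, ℓ(γ^{(a)})` the segment
`(f_{m−a+1} − γ^{(a)}_b + b, f_{m−a+1} + b − 1)`. -/
def wordOf (f : List ℤ) (γ : List (List ℕ)) : List Seg :=
  ((List.range γ.length).map (fun a0 =>
    (List.range (γ.getD a0 []).length).map (fun b0 =>
      (f.getD (f.length - 1 - a0) 0 - ((γ.getD a0 []).getD b0 0 : ℤ) + (b0 + 1 : ℤ),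
       f.getD (f.length - 1 - a0) 0 + (b0 : ℤ))))).flatten


/-- The `i`-th Drinfeld polynomial of a multiset of integral segments:
`Q_i(x) = ∏_{b : |s_b| ≥ i} (1 − q^{2(j_b + 1 − i)} x)`. -/
noncomputable def drinfeld (q : ℂ) (s : Multiset Seg) (i : ℕ) : Polynomial ℂ :=
  ((s.filter (fun p => (i : ℤ) ≤ segLen p)).map
    (fun p => 1 - Polynomial.C (q ^ (2 * (p.2 + 1 - (i : ℤ)))) * Polynomial.X)).prod

/-- The column segments of the skew shape `λ/ν`: one segment
`(j − λ′_j, j − ν′_j − 1)` for each column `j` with `λ′_j > ν′_j`. -/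
def skewSegList (lam nu : List ℕ) : List Seg :=
  ((List.range lam.headI).filter (fun j0 => conjCount nu (j0 + 1) < conjCount lam (j0 + 1))).map
    (fun (j0 : ℕ) => ((j0 : ℤ) + 1 - (conjCount lam (j0 + 1) : ℤ),
      (j0 : ℤ) - (conjCount nu (j0 + 1) : ℤ)))

/-- A cell of the Young diagram of `λ` (1-based coordinates). -/
def IsYCell (lam : List ℕ) (a b : ℕ) : Prop := 1 ≤ a ∧ 1 ≤ b ∧ b ≤ part lam a

/-- A cell of the skew shape `λ/ν` (1-based coordinates). -/
def IsSkewCell (lam nu : List ℕ) (a b : ℕ) : Prop := 1 ≤ a ∧ part nu a < b ∧ b ≤ part lam a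

instance (lam nu : List ℕ) (a b : ℕ) : Decidable (IsSkewCell lam nu a b) := by
  unfold IsSkewCell; infer_instance

/-- A semistandard skew tableau of shape `λ/ν`, encoded as a function on 1-based coordinates
vanishing outside the shape, with positive entries weakly increasing along rows and strictly
increasing down columns. -/
def IsSSSkewTableau (lam nu : List ℕ) (T : ℕ → ℕ → ℕ) : Prop :=
  (∀ a b, ¬ IsSkewCell lam nu a b → T a b = 0) ∧
  (∀ a b, IsSkewCell lam nu a b → 1 ≤ T a b) ∧
  (∀ a b, IsSkewCell lam nu a b → IsSkewCell lam nu a (b + 1) → T a b ≤ T a (b + 1)) ∧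
  (∀ a b, IsSkewCell lam nu a b → IsSkewCell lam nu (a + 1) b → T a b < T (a + 1) b)

/-- Number of cells of `λ/ν` where `T` takes the value `i`. -/
def entryCount (lam nu : List ℕ) (T : ℕ → ℕ → ℕ) (i : ℕ) : ℕ :=
  ((Finset.range (lam.length + 1) ×ˢ Finset.range (lam.headI + 1)).filter
    (fun ab => IsSkewCell lam nu ab.1 ab.2 ∧ T ab.1 ab.2 = i)).card

/-- The reverse reading word of a skew tableau: each row right to left, rows top to bottom. -/
def rword (lam nu : List ℕ) (T : ℕ → ℕ → ℕ) : List ℕ :=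
  ((List.range lam.length).map (fun a0 =>
    (List.range (part lam (a0 + 1) - part nu (a0 + 1))).map
      (fun k => T (a0 + 1) (part lam (a0 + 1) - k)))).flatten

/-- A lattice word: in every prefix, `i` occurs at least as often as `i + 1`, for all `i ≥ 1`. -/
def IsLatticeWord (L : List ℕ) : Prop :=
  ∀ n i, 1 ≤ i → (L.take n).count (i + 1) ≤ (L.take n).count i

/-- `ρ_i = #{j : λ′_j − ν′_j ≥ i}`. -/
def rhoVal (lam nu : List ℕ) (i : ℕ) : ℕ :=
  ((Finset.range lam.headI).filter
    (fun j0 => i + conjCount nu (j0 + 1) ≤ conjCount lam (j0 + 1))).card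

/-- `t^λ(a,b) = λ_1 + ⋯ + λ_{a−1} + b`: the row-by-row enumeration of the cells of `λ`. -/
def rowIdx (lam : List ℕ) (a b : ℕ) : ℕ := (lam.take (a - 1)).sum + b

/-- `t_λ(a,b) = λ′_1 + ⋯ + λ′_{b−1} + a`: the column-by-column enumeration of the cells of `λ`. -/
def colIdx (lam : List ℕ) (a b : ℕ) : ℕ := ((conjList lam).take (b - 1)).sum + a

/-- A cell of the Young diagram of a multipartition: component `k`, row `a`, column `b`. -/
def IsMCell (lam : List (List ℕ)) (k a b : ℕ) : Prop :=
  1 ≤ k ∧ k ≤ lam.length ∧ IsYCell (lam.getD (k - 1) []) a b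

/-- `t^{λ̲}`: row-by-row enumeration, components in order `1, …, m`. -/
def mRowIdx (lam : List (List ℕ)) (k a b : ℕ) : ℕ :=
  ((lam.take (k - 1)).map List.sum).sum + rowIdx (lam.getD (k - 1) []) a b

/-- `t_{λ̲}`: column-by-column enumeration, components in order `m, …, 1`. -/
def mColIdx (lam : List (List ℕ)) (k a b : ℕ) : ℕ :=
  ((lam.drop k).map List.sum).sum + colIdx (lam.getD (k - 1) []) a b


/-!
A block of a standard word is a run of segments whose upper ends go up by one and whose lower
ends strictly increase, so the segment lengths weakly decrease along it (a partition), and a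
block of `ℓ` segments starting at upper end `j` ends at `j + ℓ - 1`. For consecutive blocks
starting at `j` and `j'`, the ordering of the word gives `j + ℓ - 1 ≤ j'`, i.e. the length bound
of (SK2). If `j + ℓ - 1 = j'`, the tie rule of standard words makes the lower end of the first
segment of the next block at most that of the last segment of this one, which is the part
inequality of (SK2); if `j + ℓ = j'`, maximality of the block rules out a strict increase of
lower ends, which gives the strict inequality of (SK3).
-/

def ChainStep (p q : Seg) : Prop := q.2 = p.2 + 1 ∧ p.1 < q.1

def WordStep (p q : Seg) : Prop := p.2 ≤ q.2 ∧ (p.2 = q.2 → q.1 ≤ p.1)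

def segSize (s : Seg) : ℕ := (segLen s).toNat

lemma natCast_segSize {s : Seg} (hs : s.1 ≤ s.2) : (segSize s : ℤ) = segLen s :=
  Int.toNat_of_nonneg (by unfold segLen; omega)

section Blocks

open List

lemma chainLen_cons_of_chainStep {p q : Seg} (t : List Seg) (h : ChainStep p q) :
    chainLen p (q :: t) = chainLen q t + 1 :=
  if_pos h

lemma chainLen_cons_of_not_chainStep {p q : Seg} (t : List Seg) (h : ¬ ChainStep p q) :
    chainLen p (q :: t) = 0 :=
  if_neg h

lemma isChain_cons_take_chainLen (p : Seg) (rest : List Seg) :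
    (p :: rest.take (chainLen p rest)).IsChain ChainStep := by
  induction rest generalizing p with
  | nil => simp
  | cons q t ih =>
    by_cases h : ChainStep p q
    · rw [chainLen_cons_of_chainStep t h, take_succ_cons]
      exact (ih q).cons_cons h
    · simp [chainLen_cons_of_not_chainStep t h]

lemma not_chainStep_getLast_of_drop_chainLen_eq_cons {p q : Seg} {rest l : List Seg}
    (h : rest.drop (chainLen p rest) = q :: l) :
    ¬ ChainStep ((p :: rest.take (chainLen p rest)).getLast (cons_ne_nil _ _)) q := by
  induction rest generalizing p with
  | nil => simp [chainLen] at h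
  | cons q' t ih =>
    by_cases hs : ChainStep p q'
    · rw [chainLen_cons_of_chainStep t hs, drop_succ_cons] at h
      simpa [chainLen_cons_of_chainStep t hs] using ih h
    · rw [chainLen_cons_of_not_chainStep t hs, drop_zero, cons.injEq] at h
      obtain ⟨rfl, -⟩ := h
      simpa [chainLen_cons_of_not_chainStep t hs] using hs

lemma blocks_cons (p : Seg) (rest : List Seg) :
    blocks (p :: rest) =
      (p :: rest.take (chainLen p rest)) :: blocks (rest.drop (chainLen p rest)) := by
  rw [blocks]

lemma flatten_blocks (w : List Seg) : (blocks w).flatten = w := by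
  induction w using blocks.induct with
  | case1 => simp [blocks]
  | case2 p rest ih => simp [blocks_cons, ih]

lemma ne_nil_and_isChain_of_mem_blocks {w b : List Seg} (hb : b ∈ blocks w) :
    b ≠ [] ∧ b.IsChain ChainStep := by
  induction w using blocks.induct with
  | case1 => simp [blocks] at hb
  | case2 p rest ih =>
    rw [blocks_cons, mem_cons] at hb
    rcases hb with rfl | hb
    · exact ⟨cons_ne_nil _ _, isChain_cons_take_chainLen p rest⟩
    · exact ih hb

lemma mem_of_mem_of_mem_blocks {w b : List Seg} {s : Seg} (hb : b ∈ blocks w) (hs : s ∈ b) :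
    s ∈ w :=
  flatten_blocks w ▸ mem_flatten_of_mem hb hs

def BlockBoundary (b b' : List Seg) : Prop :=
  ∀ L ∈ b.getLast?, ∀ q ∈ b'.head?, WordStep L q ∧ ¬ ChainStep L q

lemma isChain_blocks {w : List Seg} (hw : w.IsChain WordStep) :
    (blocks w).IsChain BlockBoundary := by
  induction w using blocks.induct with
  | case1 => simp [blocks]
  | case2 p rest ih =>
    rw [blocks_cons, isChain_cons]
    have hsplit : p :: rest =
        (p :: rest.take (chainLen p rest)) ++ rest.drop (chainLen p rest) := by simp
    rw [hsplit, isChain_append] at hw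
    refine ⟨fun b' hb' => ?_, ih hw.2.1⟩
    obtain ⟨q, l, hql⟩ : ∃ q l, rest.drop (chainLen p rest) = q :: l := by
      cases h : rest.drop (chainLen p rest) with
      | nil => simp [h, blocks] at hb'
      | cons q l => exact ⟨q, l, rfl⟩
    rw [hql, blocks_cons, head?_cons, Option.mem_some_iff] at hb'
    intro L hL q' hq'
    rw [← hb', head?_cons, Option.mem_some_iff] at hq'
    subst hq'
    rw [getLast?_eq_some_getLast (cons_ne_nil _ _), Option.mem_some_iff] at hL
    subst hL
    exact ⟨hw.2.2 _ (by simp [getLast?_eq_some_getLast]) _ (by simp [hql]),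
      not_chainStep_getLast_of_drop_chainLen_eq_cons hql⟩

lemma getLast_snd_of_isChain_chainStep {p : Seg} {l : List Seg}
    (h : (p :: l).IsChain ChainStep) :
    ((p :: l).getLast (cons_ne_nil _ _)).2 = p.2 + l.length := by
  induction l generalizing p with
  | nil => simp
  | cons q t ih =>
    rw [isChain_cons_cons] at h
    rw [getLast_cons_cons, ih h.2, h.1.1, length_cons]
    push_cast
    ring

lemma segSize_le_of_chainStep {p q : Seg} (h : ChainStep p q) : segSize q ≤ segSize p := by
  unfold segSize segLen ChainStep at *
  omega

lemma isPartition_map_segSize {b : List Seg} (hb : b.IsChain ChainStep)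
    (hproper : ∀ s ∈ b, s.1 ≤ s.2) : IsPartition (b.map segSize) := by
  refine ⟨?_, ?_⟩
  · rw [← isChain_iff_pairwise, isChain_map]
    exact hb.imp fun _ _ => segSize_le_of_chainStep
  · simp only [mem_map, forall_exists_index, and_imp]
    rintro _ s hs rfl
    have := hproper s hs
    unfold segSize segLen
    omega

end Blocks

/-- Conditions (SK2) and (SK3) for two neighbouring components `λ, μ` with `d = f_a - f_{a+1}`. -/
def KleshchevPair (d : ℤ) (lam mu : List ℕ) : Prop :=
  (lam.length : ℤ) ≤ d + 1 ∧ part lam (d.toNat + 1) ≤ part mu 1 ∧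
    ((lam.length : ℤ) = d → (part lam d.toNat : ℤ) ≤ part mu 1 - 1)

lemma part_length_eq_getLast (l : List ℕ) (h : l ≠ []) : part l l.length = l.getLast h := by
  rw [part, List.getLast_eq_getElem, List.getD_eq_getElem]

lemma kleshchevPair_of_blockBoundary {p p' : Seg} {l l' : List Seg}
    (hc : (p :: l).IsChain ChainStep) (hproper : ∀ s ∈ p :: l, s.1 ≤ s.2)
    (hp' : p'.1 ≤ p'.2) (hbd : BlockBoundary (p :: l) (p' :: l')) :
    KleshchevPair (p'.2 - p.2) ((p :: l).map segSize) ((p' :: l').map segSize) := by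
  set L := (p :: l).getLast (List.cons_ne_nil _ _)
  have hL : L.2 = p.2 + l.length := getLast_snd_of_isChain_chainStep hc
  have hLproper : L.1 ≤ L.2 := hproper L (List.getLast_mem _)
  obtain ⟨⟨hle, htie⟩, hstep⟩ := hbd L (by simp [L, List.getLast?_eq_some_getLast]) p' rfl
  have hlast : part ((p :: l).map segSize) (l.length + 1) = segSize L := by
    have := part_length_eq_getLast ((p :: l).map segSize) (by simp)
    rwa [List.getLast_map, List.length_map, List.length_cons] at this
  have hfirst : part ((p' :: l').map segSize) 1 = segSize p' := rfl
  simp only [KleshchevPair, List.length_map, List.length_cons]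
  refine ⟨by push_cast; omega, ?_, fun hlen => ?_⟩
  · rcases lt_or_eq_of_le (show (l.length : ℤ) ≤ p'.2 - p.2 by omega) with hlt | heq
    · rw [part, List.getD_eq_default _ _ (by rw [List.length_map, List.length_cons]; omega)]
      exact Nat.zero_le _
    · rw [show (p'.2 - p.2).toNat + 1 = l.length + 1 by omega, hlast, hfirst]
      have := htie (by omega)
      unfold segSize segLen
      omega
  · rw [show (p'.2 - p.2).toNat = l.length + 1 by omega, hlast, hfirst,
      natCast_segSize hLproper, natCast_segSize hp']
    have : p'.1 ≤ L.1 := by by_contra; exact hstep ⟨by omega, by omega⟩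
    unfold segLen
    omega

lemma isStandardKleshchev_of_isChain {r : ℕ} {f : List ℤ} {γ : List (List ℕ)}
    (hlen : γ.length = f.length) (hγ : IsMultipartition r γ) (hne : ∀ p ∈ γ, p ≠ [])
    (hpair : (γ.zip f).IsChain fun x y => KleshchevPair (x.2 - y.2) x.1 y.1) :
    IsStandardKleshchev r f γ := by
  have hadj : ∀ a, 1 ≤ a → a ≤ f.length - 1 →
      KleshchevPair (fpart f a - fpart f (a + 1)) (mpart γ a) (mpart γ (a + 1)) := by
    intro a ha1 ha2
    obtain ⟨a, rfl⟩ : ∃ a0, a = a0 + 1 := ⟨a - 1, by omega⟩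
    have := List.isChain_iff_getElem.mp hpair a (by rw [List.length_zip]; omega)
    simp only [List.getElem_zip] at this
    rw [fpart, fpart, mpart, mpart, Nat.add_sub_cancel, Nat.add_sub_cancel,
      List.getD_eq_getElem, List.getD_eq_getElem, List.getD_eq_getElem, List.getD_eq_getElem]
    exact this
  refine ⟨hlen, hγ, fun a ha1 ha2 => ?_, fun a ha1 ha2 => ?_, fun a ha1 ha2 => ?_⟩
  · rw [mpart, List.getD_eq_getElem _ _ (by omega)]
    exact hne _ (List.getElem_mem _)
  · exact ⟨(hadj a ha1 ha2).1, (hadj a ha1 ha2).2.1⟩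
  · exact (hadj a ha1 ha2).2.2

lemma gammaOf_eq_map_segSize (w : List Seg) : gammaOf w = (blocks w).map (List.map segSize) :=
  rfl

lemma fstar_fOf (w : List Seg) : fstar (fOf w) = (blocks w).map fun b => -b.headI.2 := by
  simp [fstar, fOf, Function.comp_def]

lemma isMultipartition_gammaOf {r : ℕ} {w : List Seg} (hw : IsStandardWord r w) :
    IsMultipartition r (gammaOf w) := by
  obtain ⟨-, hproper, -, hsum⟩ := hw
  refine ⟨?_, ?_⟩
  · simp only [gammaOf, List.mem_map]
    rintro _ ⟨b, hb, rfl⟩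
    exact isPartition_map_segSize (ne_nil_and_isChain_of_mem_blocks hb).2
      fun s hs => hproper s (mem_of_mem_of_mem_blocks hb hs)
  · have : ((gammaOf w).map List.sum).sum = (w.map segSize).sum := by
      rw [← List.sum_flatten, gammaOf, ← List.map_flatten, flatten_blocks]; rfl
    rw [← Int.ofNat_inj, this, ← hsum, Nat.cast_list_sum, List.map_map]
    exact congrArg List.sum (List.map_congr_left fun s hs => natCast_segSize (hproper s hs))

lemma isChain_kleshchevPair_gammaOf {r : ℕ} {w : List Seg} (hw : IsStandardWord r w) :
    ((gammaOf w).zip (fstar (fOf w))).IsChain fun x y => KleshchevPair (x.2 - y.2) x.1 y.1 := by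
  obtain ⟨-, hproper, hchain, -⟩ := hw
  rw [gammaOf_eq_map_segSize, fstar_fOf, List.zip_map', List.isChain_map]
  refine (isChain_blocks hchain).imp_of_mem_imp fun b b' hb hb' hbd => ?_
  obtain ⟨hne, hc⟩ := ne_nil_and_isChain_of_mem_blocks hb
  obtain ⟨p, l, rfl⟩ := List.exists_cons_of_ne_nil hne
  obtain ⟨p', l', rfl⟩ := List.exists_cons_of_ne_nil (ne_nil_and_isChain_of_mem_blocks hb').1
  convert kleshchevPair_of_blockBoundary hc (fun s hs => hproper s (mem_of_mem_of_mem_blocks hb hs))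
    (hproper p' (mem_of_mem_of_mem_blocks hb' List.mem_cons_self)) hbd using 1
  simp only [List.headI]
  ring

/-- For every standard word `w` of total length `r`, the multipartition `γ̲_w`
is a standard Kleshchev multipartition of `r` relative to `f_w* = (−f_m, …, −f_1)`, i.e. it
satisfies (SK1), (SK2) and (SK3). -/
theorem gammaOf_isStandardKleshchev (r : ℕ) (w : List Seg) (hw : IsStandardWord r w) :
    IsStandardKleshchev r (fstar (fOf w)) (gammaOf w) := by
  refine isStandardKleshchev_of_isChain (by simp [gammaOf, fstar_fOf])
    (isMultipartition_gammaOf hw) ?_ (isChain_kleshchevPair_gammaOf hw)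
  simp only [gammaOf_eq_map_segSize, List.mem_map]
  rintro _ ⟨b, hb, rfl⟩
  simpa using (ne_nil_and_isChain_of_mem_blocks hb).1
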